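/- Let G = A *_H B be an amalgamated free product and let a ∈ A \ H such that a is not conjugate in G into H. If w ∈ G satisfies w⁻¹aw ∈ A \ H, then w ∈ A. -/

import Mathlib

/-!
Write `w = u s` with `u ∈ A` and `s` a reduced word whose first letter is not in `A`. The element
`u⁻¹ a u` lies in `A \ H`, since `a` is not conjugate into `H`, so if `s` were nonempty then
`s⁻¹ (u⁻¹ a u) s` would be a reduced word of length `2 |s| + 1 ≥ 3`. By the normal form theorem,
reduced words representing the same element have the same sequence of factor indices, so this
word cannot represent the one-letter element `w⁻¹ a w ∈ A \ H`. Hence `s` is empty and `w = u`.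
-/

open Monoid

theorem Subgroup.IsComplement.eq_one_of_mem_of_mem {G : Type*} [Group G] {S T : Set G}
    (hST : Subgroup.IsComplement S T) (hS : 1 ∈ S) (hT : 1 ∈ T) {g : G} (hgS : g ∈ S)
    (hgT : g ∈ T) : g = 1 :=
  congrArg Subtype.val <| (hST.equiv_snd_eq_self_of_mem_of_one_mem hS hgT).symm.trans
    (hST.equiv_snd_eq_one_of_mem_of_one_mem hT hgS)

namespace Monoid.CoprodI.NeWord

variable {ι : Type*} {G : ι → Type*} [∀ i, Group (G i)]

theorem toList_inv {i j : ι} (w : NeWord G i j) :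
    w.inv.toList = (w.toList.map fun l => ⟨l.1, l.2⁻¹⟩).reverse := by
  induction w <;> simp [inv, *]

end Monoid.CoprodI.NeWord

namespace Monoid.PushoutI

variable {ι : Type*} {H : Type*} {G : ι → Type*} [Group H] [∀ i, Group (G i)]
  {φ : ∀ i, H →* G i}

open CoprodI

theorem of_mem_range_base {i : ι} {x : G i} (hx : x ∈ (φ i).range) :
    of i x ∈ (base φ).range := by
  obtain ⟨h, rfl⟩ := hx
  exact ⟨h, (of_apply_eq_base φ i h).symm⟩

theorem NormalWord.reduced {d : Transversal φ} (w : NormalWord d) : Reduced φ w.toWord :=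
  fun g hg hgφ => w.ne_one g hg <|
    (d.compl g.1).eq_one_of_mem_of_mem (one_mem _) (d.one_mem g.1) hgφ (w.normalized _ _ hg)

theorem Reduced.map_fst_eq_of_prod_eq (hφ : ∀ i, Function.Injective (φ i)) {w₁ w₂ : Word G}
    (h₁ : Reduced φ w₁) (h₂ : Reduced φ w₂) (h : ofCoprodI (φ := φ) w₁.prod = ofCoprodI w₂.prod) :
    w₁.toList.map Sigma.fst = w₂.toList.map Sigma.fst := by
  obtain ⟨d⟩ := NormalWord.transversal_nonempty φ hφ
  obtain ⟨n₁, hn₁, hfst₁⟩ := h₁.exists_normalWord_prod_eq d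
  obtain ⟨n₂, hn₂, hfst₂⟩ := h₂.exists_normalWord_prod_eq d
  rw [← hfst₁, ← hfst₂, NormalWord.prod_injective (hn₁.trans (h.trans hn₂.symm))]

theorem exists_eq_of_mul_ofCoprodI_prod (hφ : ∀ i, Function.Injective (φ i)) (i : ι)
    (w : PushoutI φ) : ∃ (u : G i) (s : Word G), Reduced φ s ∧ s.fstIdx ≠ some i ∧
      w = of i u * ofCoprodI s.prod := by
  classical
  obtain ⟨d⟩ := NormalWord.transversal_nonempty φ hφ
  set n := NormalWord.equiv (d := d) w
  set p := Word.equivPair i n.toWord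
  refine ⟨φ i n.head * p.head, p.tail,
    fun g hg => n.reduced g (Word.mem_of_mem_equivPair_tail _ hg), p.fstIdx_ne, ?_⟩
  calc w = n.prod := (NormalWord.equiv.symm_apply_apply w).symm
    _ = base φ n.head * ofCoprodI (Word.rcons p).prod := by
      rw [NormalWord.prod, ← Word.equivPair_symm, Equiv.symm_apply_apply]
    _ = _ := by rw [Word.prod_rcons, map_mul, ofCoprodI_of, map_mul, of_apply_eq_base, mul_assoc]

theorem Reduced.eq_empty_of_conj_eq (hφ : ∀ i, Function.Injective (φ i)) {i : ι} {s : Word G}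
    (hs : Reduced φ s) (hsi : s.fstIdx ≠ some i) {x z : G i} (hx : x ∉ (φ i).range)
    (hz : z ∉ (φ i).range)
    (hconj : (ofCoprodI (φ := φ) s.prod)⁻¹ * of i x * ofCoprodI s.prod = of i z) :
    s = .empty := by
  by_contra hne
  obtain ⟨k, l, v, rfl⟩ := NeWord.of_word s hne
  have hki : k ≠ i := fun hki => hsi (by simp [Word.fstIdx, NeWord.toWord, hki])
  have hx1 : x ≠ 1 := fun h => hx (h ▸ one_mem _)
  have hz1 : z ≠ 1 := fun h => hz (h ▸ one_mem _)
  let c := NeWord.append v.inv hki (NeWord.append (.singleton x hx1) hki.symm v)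
  have hc : Reduced φ c.toWord := by
    intro g hg
    simp only [c, NeWord.toWord, NeWord.toList, NeWord.toList_inv, List.mem_append,
      List.mem_reverse, List.mem_map, List.mem_singleton] at hg
    rcases hg with ⟨g', hg', rfl⟩ | rfl | hg
    · exact fun hg => hs _ hg' (by simpa using inv_mem hg)
    · exact hx
    · exact hs _ hg
  have hz' : Reduced φ (NeWord.singleton z hz1).toWord := by
    simpa [Reduced, NeWord.toWord] using hz
  have hlen := congrArg List.length <| hc.map_fst_eq_of_prod_eq hφ hz' <| by
    change ofCoprodI c.prod = ofCoprodI (NeWord.singleton z hz1).prod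
    rw [NeWord.prod_singleton, ofCoprodI_of, ← hconj]
    simp only [c, NeWord.append_prod, NeWord.inv_prod, NeWord.prod_singleton, map_mul, map_inv,
      ofCoprodI_of, mul_assoc]
    rfl
  simp only [c, NeWord.toWord, NeWord.toList, NeWord.toList_inv, List.length_append,
    List.length_reverse, List.length_map, List.length_singleton] at hlen
  exact v.toList_ne_nil (List.length_eq_zero_iff.mp (by omega))

end Monoid.PushoutI

theorem stmt_8_general {ι : Type*} {H : Type*} {G : ι → Type*} [Group H] [∀ i, Group (G i)]
    (φ : ∀ i, H →* G i) (hφ : ∀ i, Function.Injective (φ i)) (i : ι)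
    (a : PushoutI φ)
    (haA : a ∈ (PushoutI.of (φ := φ) i).range)
    (hnconj : ¬ ∃ g : PushoutI φ, g⁻¹ * a * g ∈ (PushoutI.base φ).range)
    (w : PushoutI φ)
    (hw : w⁻¹ * a * w ∈ (PushoutI.of (φ := φ) i).range ∧
      w⁻¹ * a * w ∉ (PushoutI.base φ).range) :
    w ∈ (PushoutI.of (φ := φ) i).range := by
  obtain ⟨u, s, hs, hsi, rfl⟩ := PushoutI.exists_eq_of_mul_ofCoprodI_prod hφ i w
  obtain ⟨x, rfl⟩ := haA
  obtain ⟨z, hz⟩ := hw.1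
  have hx : u⁻¹ * x * u ∉ (φ i).range := fun hx =>
    hnconj ⟨PushoutI.of i u, by simpa only [map_mul, map_inv] using PushoutI.of_mem_range_base hx⟩
  have hz' : z ∉ (φ i).range := fun hz' => hw.2 (hz ▸ PushoutI.of_mem_range_base hz')
  obtain rfl : s = .empty := hs.eq_empty_of_conj_eq hφ hsi hx hz' <| by
    rw [hz]; simp only [map_mul, map_inv, mul_inv_rev, mul_assoc]
  exact ⟨u, by simp⟩

/-- In an amalgamated free product `G = A *_H B` (formalized as the pushout of injective
maps `φ i : H →* G i`), let `a ∈ A \ H` be not conjugate in `G` into `H`.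
If `w⁻¹aw ∈ A \ H` for some `w ∈ G`, then `w ∈ A`. -/
theorem stmt_8 {ι : Type*} {H : Type*} {G : ι → Type*} [Group H] [∀ i, Group (G i)]
    (φ : ∀ i, H →* G i) (hφ : ∀ i, Function.Injective (φ i)) (i : ι)
    (a : PushoutI φ)
    (haA : a ∈ (PushoutI.of (φ := φ) i).range)
    (haH : a ∉ (PushoutI.base φ).range)
    (hnconj : ¬ ∃ g : PushoutI φ, g⁻¹ * a * g ∈ (PushoutI.base φ).range)
    (w : PushoutI φ)
    (hw : w⁻¹ * a * w ∈ (PushoutI.of (φ := φ) i).range ∧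
      w⁻¹ * a * w ∉ (PushoutI.base φ).range) :
    w ∈ (PushoutI.of (φ := φ) i).range :=
  stmt_8_general φ hφ i a haA hnconj w hw
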